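/- arXiv:1307.2463 — 3 statements merged into one kernel-verified Lean document; each statement's English description precedes it below -/
import Mathlib

section
/- The Igusa quartic polynomial R₂ := p₁₂⁴ + (p₀² − p₁² − p₂² − p₃²) p₁₂² + p₁² p₂² + p₁² p₃² + p₂² p₃² − 2 p₀ p₁ p₂ p₃ vanishes identically upon substituting p₀ := x₀₀⁴ + x₀₁⁴ + x₁₀⁴ + x₁₁⁴, p₁ := 2(x₀₀² x₀₁² + x₁₀² x₁₁²), p₂ := 2(x₀₀² x₁₀² + x₀₁² x₁₁²), p₃ := 2(x₀₀² x₁₁² + x₀₁² x₁₀²), p₁₂ := 4 x₀₀ x₀₁ x₁₀ x₁₁; that is, the resulting polynomial in ℂ[x₀₀, x₀₁, x₁₀, x₁₁] is the zero polynomial. -/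
open MvPolynomial

/-- `P₀ = ∑_σ x_σ⁴`. -/
noncomputable def q0 : MvPolynomial (ZMod 2 × ZMod 2) ℂ :=
  X (0, 0) ^ 4 + X (0, 1) ^ 4 + X (1, 0) ^ 4 + X (1, 1) ^ 4

/-- `P₁ = 2(x₀₀²x₀₁² + x₁₀²x₁₁²)`. -/
noncomputable def q1 : MvPolynomial (ZMod 2 × ZMod 2) ℂ :=
  2 * (X (0, 0) ^ 2 * X (0, 1) ^ 2 + X (1, 0) ^ 2 * X (1, 1) ^ 2)

/-- `P₂ = 2(x₀₀²x₁₀² + x₀₁²x₁₁²)`. -/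
noncomputable def q2 : MvPolynomial (ZMod 2 × ZMod 2) ℂ :=
  2 * (X (0, 0) ^ 2 * X (1, 0) ^ 2 + X (0, 1) ^ 2 * X (1, 1) ^ 2)

/-- `P₃ = 2(x₀₀²x₁₁² + x₀₁²x₁₀²)`. -/
noncomputable def q3 : MvPolynomial (ZMod 2 × ZMod 2) ℂ :=
  2 * (X (0, 0) ^ 2 * X (1, 1) ^ 2 + X (0, 1) ^ 2 * X (1, 0) ^ 2)

/-- `P₁₂ = 4 x₀₀ x₀₁ x₁₀ x₁₁`. -/
noncomputable def q12 : MvPolynomial (ZMod 2 × ZMod 2) ℂ :=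
  4 * (X (0, 0) * X (0, 1) * X (1, 0) * X (1, 1))

/-- The Igusa quartic vanishes identically upon substituting the five Heisenberg-invariant
quartics for its variables. -/
theorem igusa_quartic_relation :
    q12 ^ 4 + (q0 ^ 2 - q1 ^ 2 - q2 ^ 2 - q3 ^ 2) * q12 ^ 2
      + q1 ^ 2 * q2 ^ 2 + q1 ^ 2 * q3 ^ 2 + q2 ^ 2 * q3 ^ 2
      - 2 * q0 * q1 * q2 * q3 = 0 := by
  unfold q0 q1 q2 q3 q12; ring
end

section
/- For g = 3, the degree-4 polynomial R₃ := (p₁₄ p₁₆ − p₁ p₁₂)(−p₂₄² − p₂₅² + p₃₄² + p₃₅²) + p₁₄ p₁₆ (p₂² − p₃²) + p₃₄ p₃₅ (p₀ p₂ + p₁ p₃ − p₄ p₆ − p₅ p₇) − p₂₄ p₂₅ (p₀ p₃ + p₁ p₂ − p₄ p₇ − p₅ p₆) − p₁₂ (p₂ p₄ p₇ + p₂ p₅ p₆ − p₃ p₄ p₆ − p₃ p₅ p₇) vanishes identically when each variable p_T is replaced by the corresponding Heisenberg-invariant quartic P_T in the 8 variables x_σ, σ ∈ (ℤ/2ℤ)³.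 -/
open MvPolynomial

/-- `(ℤ/2ℤ)³`. -/
abbrev V3 : Type := ZMod 2 × ZMod 2 × ZMod 2

/-- For `T = {0, α, β, α+β}`, the Heisenberg-invariant quartic
`P_T := ∑_ρ x_ρ x_{ρ+α} x_{ρ+β} x_{ρ+α+β}` in the 8 variables `x_σ`, `σ ∈ (ℤ/2ℤ)³`. -/
noncomputable def Pq (α β : V3) : MvPolynomial V3 ℂ :=
  ∑ ρ : V3, X ρ * X (ρ + α) * X (ρ + β) * X (ρ + α + β)

-- index `i = 4σ₁ + 2σ₂ + σ₃` corresponds to `σ = (σ₁, σ₂, σ₃)`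
noncomputable def p0 : MvPolynomial V3 ℂ := Pq 0 0
noncomputable def p1 : MvPolynomial V3 ℂ := Pq (0, 0, 1) 0
noncomputable def p2 : MvPolynomial V3 ℂ := Pq (0, 1, 0) 0
noncomputable def p3 : MvPolynomial V3 ℂ := Pq (0, 1, 1) 0
noncomputable def p4 : MvPolynomial V3 ℂ := Pq (1, 0, 0) 0
noncomputable def p5 : MvPolynomial V3 ℂ := Pq (1, 0, 1) 0
noncomputable def p6 : MvPolynomial V3 ℂ := Pq (1, 1, 0) 0
noncomputable def p7 : MvPolynomial V3 ℂ := Pq (1, 1, 1) 0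
noncomputable def p12 : MvPolynomial V3 ℂ := Pq (0, 0, 1) (0, 1, 0)
noncomputable def p14 : MvPolynomial V3 ℂ := Pq (0, 0, 1) (1, 0, 0)
noncomputable def p16 : MvPolynomial V3 ℂ := Pq (0, 0, 1) (1, 1, 0)
noncomputable def p24 : MvPolynomial V3 ℂ := Pq (0, 1, 0) (1, 0, 0)
noncomputable def p25 : MvPolynomial V3 ℂ := Pq (0, 1, 0) (1, 0, 1)
noncomputable def p34 : MvPolynomial V3 ℂ := Pq (0, 1, 1) (1, 0, 0)
noncomputable def p35 : MvPolynomial V3 ℂ := Pq (0, 1, 1) (1, 0, 1)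

noncomputable def x000 : MvPolynomial V3 ℂ := X ((0:ZMod 2), (0:ZMod 2), (0:ZMod 2))
noncomputable def x001 : MvPolynomial V3 ℂ := X ((0:ZMod 2), (0:ZMod 2), (1:ZMod 2))
noncomputable def x010 : MvPolynomial V3 ℂ := X ((0:ZMod 2), (1:ZMod 2), (0:ZMod 2))
noncomputable def x011 : MvPolynomial V3 ℂ := X ((0:ZMod 2), (1:ZMod 2), (1:ZMod 2))
noncomputable def x100 : MvPolynomial V3 ℂ := X ((1:ZMod 2), (0:ZMod 2), (0:ZMod 2))
noncomputable def x101 : MvPolynomial V3 ℂ := X ((1:ZMod 2), (0:ZMod 2), (1:ZMod 2))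
noncomputable def x110 : MvPolynomial V3 ℂ := X ((1:ZMod 2), (1:ZMod 2), (0:ZMod 2))
noncomputable def x111 : MvPolynomial V3 ℂ := X ((1:ZMod 2), (1:ZMod 2), (1:ZMod 2))

lemma p0_eq : p0 = x000 * x000 * x000 * x000 + x001 * x001 * x001 * x001 + x010 * x010 * x010 * x010 + x011 * x011 * x011 * x011 + x100 * x100 * x100 * x100 + x101 * x101 * x101 * x101 + x110 * x110 * x110 * x110 + x111 * x111 * x111 * x111 := by
  simp only [p0, Pq, Fintype.sum_prod_type]
  rw [show (Finset.univ : Finset (ZMod 2)) = {0, 1} by decide]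
  simp only [Finset.sum_pair (by decide : (0:ZMod 2) ≠ 1), Prod.mk_add_mk, Prod.mk.injEq,
    Prod.fst_zero, Prod.snd_zero, add_zero,
    show (0:ZMod 2)+0 = 0 from by decide, show (0:ZMod 2)+1 = 1 from by decide,
    show (1:ZMod 2)+0 = 1 from by decide, show (1:ZMod 2)+1 = 0 from by decide]
  simp only [x000, x001, x010, x011, x100, x101, x110, x111]
  ring

lemma p1_eq : p1 = x000 * x001 * x000 * x001 + x001 * x000 * x001 * x000 + x010 * x011 * x010 * x011 + x011 * x010 * x011 * x010 + x100 * x101 * x100 * x101 + x101 * x100 * x101 * x100 + x110 * x111 * x110 * x111 + x111 * x110 * x111 * x110 := by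
  simp only [p1, Pq, Fintype.sum_prod_type]
  rw [show (Finset.univ : Finset (ZMod 2)) = {0, 1} by decide]
  simp only [Finset.sum_pair (by decide : (0:ZMod 2) ≠ 1), Prod.mk_add_mk, Prod.mk.injEq,
    Prod.fst_zero, Prod.snd_zero, add_zero,
    show (0:ZMod 2)+0 = 0 from by decide, show (0:ZMod 2)+1 = 1 from by decide,
    show (1:ZMod 2)+0 = 1 from by decide, show (1:ZMod 2)+1 = 0 from by decide]
  simp only [x000, x001, x010, x011, x100, x101, x110, x111]
  ring

lemma p2_eq : p2 = x000 * x010 * x000 * x010 + x001 * x011 * x001 * x011 + x010 * x000 * x010 * x000 + x011 * x001 * x011 * x001 + x100 * x110 * x100 * x110 + x101 * x111 * x101 * x111 + x110 * x100 * x110 * x100 + x111 * x101 * x111 * x101 := by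
  simp only [p2, Pq, Fintype.sum_prod_type]
  rw [show (Finset.univ : Finset (ZMod 2)) = {0, 1} by decide]
  simp only [Finset.sum_pair (by decide : (0:ZMod 2) ≠ 1), Prod.mk_add_mk, Prod.mk.injEq,
    Prod.fst_zero, Prod.snd_zero, add_zero,
    show (0:ZMod 2)+0 = 0 from by decide, show (0:ZMod 2)+1 = 1 from by decide,
    show (1:ZMod 2)+0 = 1 from by decide, show (1:ZMod 2)+1 = 0 from by decide]
  simp only [x000, x001, x010, x011, x100, x101, x110, x111]
  ring

lemma p3_eq : p3 = x000 * x011 * x000 * x011 + x001 * x010 * x001 * x010 + x010 * x001 * x010 * x001 + x011 * x000 * x011 * x000 + x100 * x111 * x100 * x111 + x101 * x110 * x101 * x110 + x110 * x101 * x110 * x101 + x111 * x100 * x111 * x100 := by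
  simp only [p3, Pq, Fintype.sum_prod_type]
  rw [show (Finset.univ : Finset (ZMod 2)) = {0, 1} by decide]
  simp only [Finset.sum_pair (by decide : (0:ZMod 2) ≠ 1), Prod.mk_add_mk, Prod.mk.injEq,
    Prod.fst_zero, Prod.snd_zero, add_zero,
    show (0:ZMod 2)+0 = 0 from by decide, show (0:ZMod 2)+1 = 1 from by decide,
    show (1:ZMod 2)+0 = 1 from by decide, show (1:ZMod 2)+1 = 0 from by decide]
  simp only [x000, x001, x010, x011, x100, x101, x110, x111]
  ring

lemma p4_eq : p4 = x000 * x100 * x000 * x100 + x001 * x101 * x001 * x101 + x010 * x110 * x010 * x110 + x011 * x111 * x011 * x111 + x100 * x000 * x100 * x000 + x101 * x001 * x101 * x001 + x110 * x010 * x110 * x010 + x111 * x011 * x111 * x011 := by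
  simp only [p4, Pq, Fintype.sum_prod_type]
  rw [show (Finset.univ : Finset (ZMod 2)) = {0, 1} by decide]
  simp only [Finset.sum_pair (by decide : (0:ZMod 2) ≠ 1), Prod.mk_add_mk, Prod.mk.injEq,
    Prod.fst_zero, Prod.snd_zero, add_zero,
    show (0:ZMod 2)+0 = 0 from by decide, show (0:ZMod 2)+1 = 1 from by decide,
    show (1:ZMod 2)+0 = 1 from by decide, show (1:ZMod 2)+1 = 0 from by decide]
  simp only [x000, x001, x010, x011, x100, x101, x110, x111]
  ring

lemma p5_eq : p5 = x000 * x101 * x000 * x101 + x001 * x100 * x001 * x100 + x010 * x111 * x010 * x111 + x011 * x110 * x011 * x110 + x100 * x001 * x100 * x001 + x101 * x000 * x101 * x000 + x110 * x011 * x110 * x011 + x111 * x010 * x111 * x010 := by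
  simp only [p5, Pq, Fintype.sum_prod_type]
  rw [show (Finset.univ : Finset (ZMod 2)) = {0, 1} by decide]
  simp only [Finset.sum_pair (by decide : (0:ZMod 2) ≠ 1), Prod.mk_add_mk, Prod.mk.injEq,
    Prod.fst_zero, Prod.snd_zero, add_zero,
    show (0:ZMod 2)+0 = 0 from by decide, show (0:ZMod 2)+1 = 1 from by decide,
    show (1:ZMod 2)+0 = 1 from by decide, show (1:ZMod 2)+1 = 0 from by decide]
  simp only [x000, x001, x010, x011, x100, x101, x110, x111]
  ring

lemma p6_eq : p6 = x000 * x110 * x000 * x110 + x001 * x111 * x001 * x111 + x010 * x100 * x010 * x100 + x011 * x101 * x011 * x101 + x100 * x010 * x100 * x010 + x101 * x011 * x101 * x011 + x110 * x000 * x110 * x000 + x111 * x001 * x111 * x001 := by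
  simp only [p6, Pq, Fintype.sum_prod_type]
  rw [show (Finset.univ : Finset (ZMod 2)) = {0, 1} by decide]
  simp only [Finset.sum_pair (by decide : (0:ZMod 2) ≠ 1), Prod.mk_add_mk, Prod.mk.injEq,
    Prod.fst_zero, Prod.snd_zero, add_zero,
    show (0:ZMod 2)+0 = 0 from by decide, show (0:ZMod 2)+1 = 1 from by decide,
    show (1:ZMod 2)+0 = 1 from by decide, show (1:ZMod 2)+1 = 0 from by decide]
  simp only [x000, x001, x010, x011, x100, x101, x110, x111]
  ring

lemma p7_eq : p7 = x000 * x111 * x000 * x111 + x001 * x110 * x001 * x110 + x010 * x101 * x010 * x101 + x011 * x100 * x011 * x100 + x100 * x011 * x100 * x011 + x101 * x010 * x101 * x010 + x110 * x001 * x110 * x001 + x111 * x000 * x111 * x000 := by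
  simp only [p7, Pq, Fintype.sum_prod_type]
  rw [show (Finset.univ : Finset (ZMod 2)) = {0, 1} by decide]
  simp only [Finset.sum_pair (by decide : (0:ZMod 2) ≠ 1), Prod.mk_add_mk, Prod.mk.injEq,
    Prod.fst_zero, Prod.snd_zero, add_zero,
    show (0:ZMod 2)+0 = 0 from by decide, show (0:ZMod 2)+1 = 1 from by decide,
    show (1:ZMod 2)+0 = 1 from by decide, show (1:ZMod 2)+1 = 0 from by decide]
  simp only [x000, x001, x010, x011, x100, x101, x110, x111]
  ring

lemma p12_eq : p12 = x000 * x001 * x010 * x011 + x001 * x000 * x011 * x010 + x010 * x011 * x000 * x001 + x011 * x010 * x001 * x000 + x100 * x101 * x110 * x111 + x101 * x100 * x111 * x110 + x110 * x111 * x100 * x101 + x111 * x110 * x101 * x100 := by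
  simp only [p12, Pq, Fintype.sum_prod_type]
  rw [show (Finset.univ : Finset (ZMod 2)) = {0, 1} by decide]
  simp only [Finset.sum_pair (by decide : (0:ZMod 2) ≠ 1), Prod.mk_add_mk, Prod.mk.injEq,
    Prod.fst_zero, Prod.snd_zero, add_zero,
    show (0:ZMod 2)+0 = 0 from by decide, show (0:ZMod 2)+1 = 1 from by decide,
    show (1:ZMod 2)+0 = 1 from by decide, show (1:ZMod 2)+1 = 0 from by decide]
  simp only [x000, x001, x010, x011, x100, x101, x110, x111]
  ring

lemma p14_eq : p14 = x000 * x001 * x100 * x101 + x001 * x000 * x101 * x100 + x010 * x011 * x110 * x111 + x011 * x010 * x111 * x110 + x100 * x101 * x000 * x001 + x101 * x100 * x001 * x000 + x110 * x111 * x010 * x011 + x111 * x110 * x011 * x010 := by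
  simp only [p14, Pq, Fintype.sum_prod_type]
  rw [show (Finset.univ : Finset (ZMod 2)) = {0, 1} by decide]
  simp only [Finset.sum_pair (by decide : (0:ZMod 2) ≠ 1), Prod.mk_add_mk, Prod.mk.injEq,
    Prod.fst_zero, Prod.snd_zero, add_zero,
    show (0:ZMod 2)+0 = 0 from by decide, show (0:ZMod 2)+1 = 1 from by decide,
    show (1:ZMod 2)+0 = 1 from by decide, show (1:ZMod 2)+1 = 0 from by decide]
  simp only [x000, x001, x010, x011, x100, x101, x110, x111]
  ring

lemma p16_eq : p16 = x000 * x001 * x110 * x111 + x001 * x000 * x111 * x110 + x010 * x011 * x100 * x101 + x011 * x010 * x101 * x100 + x100 * x101 * x010 * x011 + x101 * x100 * x011 * x010 + x110 * x111 * x000 * x001 + x111 * x110 * x001 * x000 := by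
  simp only [p16, Pq, Fintype.sum_prod_type]
  rw [show (Finset.univ : Finset (ZMod 2)) = {0, 1} by decide]
  simp only [Finset.sum_pair (by decide : (0:ZMod 2) ≠ 1), Prod.mk_add_mk, Prod.mk.injEq,
    Prod.fst_zero, Prod.snd_zero, add_zero,
    show (0:ZMod 2)+0 = 0 from by decide, show (0:ZMod 2)+1 = 1 from by decide,
    show (1:ZMod 2)+0 = 1 from by decide, show (1:ZMod 2)+1 = 0 from by decide]
  simp only [x000, x001, x010, x011, x100, x101, x110, x111]
  ring

lemma p24_eq : p24 = x000 * x010 * x100 * x110 + x001 * x011 * x101 * x111 + x010 * x000 * x110 * x100 + x011 * x001 * x111 * x101 + x100 * x110 * x000 * x010 + x101 * x111 * x001 * x011 + x110 * x100 * x010 * x000 + x111 * x101 * x011 * x001 := by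
  simp only [p24, Pq, Fintype.sum_prod_type]
  rw [show (Finset.univ : Finset (ZMod 2)) = {0, 1} by decide]
  simp only [Finset.sum_pair (by decide : (0:ZMod 2) ≠ 1), Prod.mk_add_mk, Prod.mk.injEq,
    Prod.fst_zero, Prod.snd_zero, add_zero,
    show (0:ZMod 2)+0 = 0 from by decide, show (0:ZMod 2)+1 = 1 from by decide,
    show (1:ZMod 2)+0 = 1 from by decide, show (1:ZMod 2)+1 = 0 from by decide]
  simp only [x000, x001, x010, x011, x100, x101, x110, x111]
  ring

lemma p25_eq : p25 = x000 * x010 * x101 * x111 + x001 * x011 * x100 * x110 + x010 * x000 * x111 * x101 + x011 * x001 * x110 * x100 + x100 * x110 * x001 * x011 + x101 * x111 * x000 * x010 + x110 * x100 * x011 * x001 + x111 * x101 * x010 * x000 := by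
  simp only [p25, Pq, Fintype.sum_prod_type]
  rw [show (Finset.univ : Finset (ZMod 2)) = {0, 1} by decide]
  simp only [Finset.sum_pair (by decide : (0:ZMod 2) ≠ 1), Prod.mk_add_mk, Prod.mk.injEq,
    Prod.fst_zero, Prod.snd_zero, add_zero,
    show (0:ZMod 2)+0 = 0 from by decide, show (0:ZMod 2)+1 = 1 from by decide,
    show (1:ZMod 2)+0 = 1 from by decide, show (1:ZMod 2)+1 = 0 from by decide]
  simp only [x000, x001, x010, x011, x100, x101, x110, x111]
  ring

lemma p34_eq : p34 = x000 * x011 * x100 * x111 + x001 * x010 * x101 * x110 + x010 * x001 * x110 * x101 + x011 * x000 * x111 * x100 + x100 * x111 * x000 * x011 + x101 * x110 * x001 * x010 + x110 * x101 * x010 * x001 + x111 * x100 * x011 * x000 := by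
  simp only [p34, Pq, Fintype.sum_prod_type]
  rw [show (Finset.univ : Finset (ZMod 2)) = {0, 1} by decide]
  simp only [Finset.sum_pair (by decide : (0:ZMod 2) ≠ 1), Prod.mk_add_mk, Prod.mk.injEq,
    Prod.fst_zero, Prod.snd_zero, add_zero,
    show (0:ZMod 2)+0 = 0 from by decide, show (0:ZMod 2)+1 = 1 from by decide,
    show (1:ZMod 2)+0 = 1 from by decide, show (1:ZMod 2)+1 = 0 from by decide]
  simp only [x000, x001, x010, x011, x100, x101, x110, x111]
  ring

lemma p35_eq : p35 = x000 * x011 * x101 * x110 + x001 * x010 * x100 * x111 + x010 * x001 * x111 * x100 + x011 * x000 * x110 * x101 + x100 * x111 * x001 * x010 + x101 * x110 * x000 * x011 + x110 * x101 * x011 * x000 + x111 * x100 * x010 * x001 := by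
  simp only [p35, Pq, Fintype.sum_prod_type]
  rw [show (Finset.univ : Finset (ZMod 2)) = {0, 1} by decide]
  simp only [Finset.sum_pair (by decide : (0:ZMod 2) ≠ 1), Prod.mk_add_mk, Prod.mk.injEq,
    Prod.fst_zero, Prod.snd_zero, add_zero,
    show (0:ZMod 2)+0 = 0 from by decide, show (0:ZMod 2)+1 = 1 from by decide,
    show (1:ZMod 2)+0 = 1 from by decide, show (1:ZMod 2)+1 = 0 from by decide]
  simp only [x000, x001, x010, x011, x100, x101, x110, x111]
  ring

/-- The generalized Igusa quartic `R₃` vanishes identically when each variable `p_T` is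
replaced by the corresponding Heisenberg-invariant quartic `P_T` in the 8 variables `x_σ`. -/
theorem igusa_quartic_relation_g3 :
    (p14 * p16 - p1 * p12) * (-p24 ^ 2 - p25 ^ 2 + p34 ^ 2 + p35 ^ 2)
      + p14 * p16 * (p2 ^ 2 - p3 ^ 2)
      + p34 * p35 * (p0 * p2 + p1 * p3 - p4 * p6 - p5 * p7)
      - p24 * p25 * (p0 * p3 + p1 * p2 - p4 * p7 - p5 * p6)
      - p12 * (p2 * p4 * p7 + p2 * p5 * p6 - p3 * p4 * p6 - p3 * p5 * p7) = 0 := by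
  rw [p0_eq, p1_eq, p2_eq, p3_eq, p4_eq, p5_eq, p6_eq, p7_eq, p12_eq, p14_eq, p16_eq,
    p24_eq, p25_eq, p34_eq, p35_eq]
  ring
end

section
/- For g = 3, every 7 × 7 minor of the 8 × 7 matrix whose columns are the partial-derivative vectors (∂P_T/∂x_σ)_{σ ∈ (ℤ/2ℤ)³} of the seven quartics P₂, P₃, P₂₄, P₃₄, P₂₅, P₃₅, P₁₂ is identically zero as a polynomial in the 8 variables x_σ; equivalently, this Jacobian matrix has rank at most 6 for all values of the variables. -/
open MvPolynomial Matrix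

/-- The seven quartics `P₂, P₃, P₂₄, P₃₄, P₂₅, P₃₅, P₁₂` (index `i = 4σ₁ + 2σ₂ + σ₃`). -/
noncomputable def cols : Fin 7 → MvPolynomial V3 ℂ :=
  ![Pq (0, 1, 0) 0, Pq (0, 1, 1) 0,
    Pq (0, 1, 0) (1, 0, 0), Pq (0, 1, 1) (1, 0, 0),
    Pq (0, 1, 0) (1, 0, 1), Pq (0, 1, 1) (1, 0, 1),
    Pq (0, 0, 1) (0, 1, 0)]

/-- The 8 × 7 Jacobian matrix `(∂P_T/∂x_σ)` of the seven quartics. -/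
noncomputable def jac : Matrix V3 (Fin 7) (MvPolynomial V3 ℂ) :=
  fun σ j => pderiv σ (cols j)

/-! ### Auxiliary material -/

lemma zmod2_sum' {M : Type*} [AddCommMonoid M] (g : ZMod 2 → M) :
    ∑ a : ZMod 2, g a = g 0 + g 1 := by
  have : (Finset.univ : Finset (ZMod 2)) = {0, 1} := by decide
  rw [this, Finset.sum_pair (by decide)]

lemma v3_sum' {M : Type*} [AddCommMonoid M] (g : V3 → M) :
    ∑ σ : V3, g σ = g (0,0,0) + g (0,0,1) + g (0,1,0) + g (0,1,1)
      + g (1,0,0) + g (1,0,1) + g (1,1,0) + g (1,1,1) := by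
  rw [Fintype.sum_prod_type]
  rw [zmod2_sum' (fun a => ∑ x : ZMod 2 × ZMod 2, g (a, x))]
  rw [Fintype.sum_prod_type, Fintype.sum_prod_type]
  rw [zmod2_sum' (fun b => ∑ c : ZMod 2, g (0, b, c)),
      zmod2_sum' (fun b => ∑ c : ZMod 2, g (1, b, c)),
      zmod2_sum' (fun c => g (0, 0, c)), zmod2_sum' (fun c => g (0, 1, c)),
      zmod2_sum' (fun c => g (1, 0, c)), zmod2_sum' (fun c => g (1, 1, c))]
  abel

/-- The sign character `(-1)^{c·σ}` (with values in `ℤ`). -/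
def sgn' (c σ : V3) : ℤ :=
  if c.1 * σ.1 + c.2.1 * σ.2.1 + c.2.2 * σ.2.2 = 0 then 1 else -1

/-- Left kernel vector associated to the character `c`. -/
noncomputable def wvec' (c : V3) (σ : V3) : MvPolynomial V3 ℂ :=
  C ((sgn' c σ : ℤ) : ℂ) * X σ

lemma key010_0 : ∑ σ : V3, wvec' (0,1,0) σ * pderiv σ (Pq (0, 1, 0) 0) = 0 := by
  rw [v3_sum']
  unfold Pq wvec'
  rw [v3_sum']
  simp only [Prod.mk_add_mk, show ((1:ZMod 2)+1 = 0) by decide,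
    show ((0:ZMod 2)+1 = 1) by decide, show ((1:ZMod 2)+0 = 1) by decide,
    show ((0:ZMod 2)+0 = 0) by decide]
  simp only [map_add, pderiv_mul]
  simp (config := { decide := true }) only [sgn', pderiv_X_self, pderiv_X_of_ne, ne_eq,
    Prod.mk.injEq, not_and, mul_zero, zero_mul, mul_one, one_mul, add_zero, zero_add,
    if_true, if_false, reduceIte, Int.cast_one, Int.cast_neg, _root_.map_one, _root_.map_neg]
  ring

lemma key010_1 : ∑ σ : V3, wvec' (0,1,0) σ * pderiv σ (Pq (0, 1, 1) 0) = 0 := by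
  rw [v3_sum']
  unfold Pq wvec'
  rw [v3_sum']
  simp only [Prod.mk_add_mk, show ((1:ZMod 2)+1 = 0) by decide,
    show ((0:ZMod 2)+1 = 1) by decide, show ((1:ZMod 2)+0 = 1) by decide,
    show ((0:ZMod 2)+0 = 0) by decide]
  simp only [map_add, pderiv_mul]
  simp (config := { decide := true }) only [sgn', pderiv_X_self, pderiv_X_of_ne, ne_eq,
    Prod.mk.injEq, not_and, mul_zero, zero_mul, mul_one, one_mul, add_zero, zero_add,
    if_true, if_false, reduceIte, Int.cast_one, Int.cast_neg, _root_.map_one, _root_.map_neg]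
  ring

lemma key010_2 : ∑ σ : V3, wvec' (0,1,0) σ * pderiv σ (Pq (0, 1, 0) (1, 0, 0)) = 0 := by
  rw [v3_sum']
  unfold Pq wvec'
  rw [v3_sum']
  simp only [Prod.mk_add_mk, show ((1:ZMod 2)+1 = 0) by decide,
    show ((0:ZMod 2)+1 = 1) by decide, show ((1:ZMod 2)+0 = 1) by decide,
    show ((0:ZMod 2)+0 = 0) by decide]
  simp only [map_add, pderiv_mul]
  simp (config := { decide := true }) only [sgn', pderiv_X_self, pderiv_X_of_ne, ne_eq,
    Prod.mk.injEq, not_and, mul_zero, zero_mul, mul_one, one_mul, add_zero, zero_add,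
    if_true, if_false, reduceIte, Int.cast_one, Int.cast_neg, _root_.map_one, _root_.map_neg]
  ring

lemma key010_3 : ∑ σ : V3, wvec' (0,1,0) σ * pderiv σ (Pq (0, 1, 1) (1, 0, 0)) = 0 := by
  rw [v3_sum']
  unfold Pq wvec'
  rw [v3_sum']
  simp only [Prod.mk_add_mk, show ((1:ZMod 2)+1 = 0) by decide,
    show ((0:ZMod 2)+1 = 1) by decide, show ((1:ZMod 2)+0 = 1) by decide,
    show ((0:ZMod 2)+0 = 0) by decide]
  simp only [map_add, pderiv_mul]
  simp (config := { decide := true }) only [sgn', pderiv_X_self, pderiv_X_of_ne, ne_eq,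
    Prod.mk.injEq, not_and, mul_zero, zero_mul, mul_one, one_mul, add_zero, zero_add,
    if_true, if_false, reduceIte, Int.cast_one, Int.cast_neg, _root_.map_one, _root_.map_neg]
  ring

lemma key010_4 : ∑ σ : V3, wvec' (0,1,0) σ * pderiv σ (Pq (0, 1, 0) (1, 0, 1)) = 0 := by
  rw [v3_sum']
  unfold Pq wvec'
  rw [v3_sum']
  simp only [Prod.mk_add_mk, show ((1:ZMod 2)+1 = 0) by decide,
    show ((0:ZMod 2)+1 = 1) by decide, show ((1:ZMod 2)+0 = 1) by decide,
    show ((0:ZMod 2)+0 = 0) by decide]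
  simp only [map_add, pderiv_mul]
  simp (config := { decide := true }) only [sgn', pderiv_X_self, pderiv_X_of_ne, ne_eq,
    Prod.mk.injEq, not_and, mul_zero, zero_mul, mul_one, one_mul, add_zero, zero_add,
    if_true, if_false, reduceIte, Int.cast_one, Int.cast_neg, _root_.map_one, _root_.map_neg]
  ring

lemma key010_5 : ∑ σ : V3, wvec' (0,1,0) σ * pderiv σ (Pq (0, 1, 1) (1, 0, 1)) = 0 := by
  rw [v3_sum']
  unfold Pq wvec'
  rw [v3_sum']
  simp only [Prod.mk_add_mk, show ((1:ZMod 2)+1 = 0) by decide,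
    show ((0:ZMod 2)+1 = 1) by decide, show ((1:ZMod 2)+0 = 1) by decide,
    show ((0:ZMod 2)+0 = 0) by decide]
  simp only [map_add, pderiv_mul]
  simp (config := { decide := true }) only [sgn', pderiv_X_self, pderiv_X_of_ne, ne_eq,
    Prod.mk.injEq, not_and, mul_zero, zero_mul, mul_one, one_mul, add_zero, zero_add,
    if_true, if_false, reduceIte, Int.cast_one, Int.cast_neg, _root_.map_one, _root_.map_neg]
  ring

lemma key010_6 : ∑ σ : V3, wvec' (0,1,0) σ * pderiv σ (Pq (0, 0, 1) (0, 1, 0)) = 0 := by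
  rw [v3_sum']
  unfold Pq wvec'
  rw [v3_sum']
  simp only [Prod.mk_add_mk, show ((1:ZMod 2)+1 = 0) by decide,
    show ((0:ZMod 2)+1 = 1) by decide, show ((1:ZMod 2)+0 = 1) by decide,
    show ((0:ZMod 2)+0 = 0) by decide]
  simp only [map_add, pderiv_mul]
  simp (config := { decide := true }) only [sgn', pderiv_X_self, pderiv_X_of_ne, ne_eq,
    Prod.mk.injEq, not_and, mul_zero, zero_mul, mul_one, one_mul, add_zero, zero_add,
    if_true, if_false, reduceIte, Int.cast_one, Int.cast_neg, _root_.map_one, _root_.map_neg]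
  ring

lemma key110_0 : ∑ σ : V3, wvec' (1,1,0) σ * pderiv σ (Pq (0, 1, 0) 0) = 0 := by
  rw [v3_sum']
  unfold Pq wvec'
  rw [v3_sum']
  simp only [Prod.mk_add_mk, show ((1:ZMod 2)+1 = 0) by decide,
    show ((0:ZMod 2)+1 = 1) by decide, show ((1:ZMod 2)+0 = 1) by decide,
    show ((0:ZMod 2)+0 = 0) by decide]
  simp only [map_add, pderiv_mul]
  simp (config := { decide := true }) only [sgn', pderiv_X_self, pderiv_X_of_ne, ne_eq,
    Prod.mk.injEq, not_and, mul_zero, zero_mul, mul_one, one_mul, add_zero, zero_add,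
    if_true, if_false, reduceIte, Int.cast_one, Int.cast_neg, _root_.map_one, _root_.map_neg]
  ring

lemma key110_1 : ∑ σ : V3, wvec' (1,1,0) σ * pderiv σ (Pq (0, 1, 1) 0) = 0 := by
  rw [v3_sum']
  unfold Pq wvec'
  rw [v3_sum']
  simp only [Prod.mk_add_mk, show ((1:ZMod 2)+1 = 0) by decide,
    show ((0:ZMod 2)+1 = 1) by decide, show ((1:ZMod 2)+0 = 1) by decide,
    show ((0:ZMod 2)+0 = 0) by decide]
  simp only [map_add, pderiv_mul]
  simp (config := { decide := true }) only [sgn', pderiv_X_self, pderiv_X_of_ne, ne_eq,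
    Prod.mk.injEq, not_and, mul_zero, zero_mul, mul_one, one_mul, add_zero, zero_add,
    if_true, if_false, reduceIte, Int.cast_one, Int.cast_neg, _root_.map_one, _root_.map_neg]
  ring

lemma key110_2 : ∑ σ : V3, wvec' (1,1,0) σ * pderiv σ (Pq (0, 1, 0) (1, 0, 0)) = 0 := by
  rw [v3_sum']
  unfold Pq wvec'
  rw [v3_sum']
  simp only [Prod.mk_add_mk, show ((1:ZMod 2)+1 = 0) by decide,
    show ((0:ZMod 2)+1 = 1) by decide, show ((1:ZMod 2)+0 = 1) by decide,
    show ((0:ZMod 2)+0 = 0) by decide]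
  simp only [map_add, pderiv_mul]
  simp (config := { decide := true }) only [sgn', pderiv_X_self, pderiv_X_of_ne, ne_eq,
    Prod.mk.injEq, not_and, mul_zero, zero_mul, mul_one, one_mul, add_zero, zero_add,
    if_true, if_false, reduceIte, Int.cast_one, Int.cast_neg, _root_.map_one, _root_.map_neg]
  ring

lemma key110_3 : ∑ σ : V3, wvec' (1,1,0) σ * pderiv σ (Pq (0, 1, 1) (1, 0, 0)) = 0 := by
  rw [v3_sum']
  unfold Pq wvec'
  rw [v3_sum']
  simp only [Prod.mk_add_mk, show ((1:ZMod 2)+1 = 0) by decide,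
    show ((0:ZMod 2)+1 = 1) by decide, show ((1:ZMod 2)+0 = 1) by decide,
    show ((0:ZMod 2)+0 = 0) by decide]
  simp only [map_add, pderiv_mul]
  simp (config := { decide := true }) only [sgn', pderiv_X_self, pderiv_X_of_ne, ne_eq,
    Prod.mk.injEq, not_and, mul_zero, zero_mul, mul_one, one_mul, add_zero, zero_add,
    if_true, if_false, reduceIte, Int.cast_one, Int.cast_neg, _root_.map_one, _root_.map_neg]
  ring

lemma key110_4 : ∑ σ : V3, wvec' (1,1,0) σ * pderiv σ (Pq (0, 1, 0) (1, 0, 1)) = 0 := by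
  rw [v3_sum']
  unfold Pq wvec'
  rw [v3_sum']
  simp only [Prod.mk_add_mk, show ((1:ZMod 2)+1 = 0) by decide,
    show ((0:ZMod 2)+1 = 1) by decide, show ((1:ZMod 2)+0 = 1) by decide,
    show ((0:ZMod 2)+0 = 0) by decide]
  simp only [map_add, pderiv_mul]
  simp (config := { decide := true }) only [sgn', pderiv_X_self, pderiv_X_of_ne, ne_eq,
    Prod.mk.injEq, not_and, mul_zero, zero_mul, mul_one, one_mul, add_zero, zero_add,
    if_true, if_false, reduceIte, Int.cast_one, Int.cast_neg, _root_.map_one, _root_.map_neg]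
  ring

lemma key110_5 : ∑ σ : V3, wvec' (1,1,0) σ * pderiv σ (Pq (0, 1, 1) (1, 0, 1)) = 0 := by
  rw [v3_sum']
  unfold Pq wvec'
  rw [v3_sum']
  simp only [Prod.mk_add_mk, show ((1:ZMod 2)+1 = 0) by decide,
    show ((0:ZMod 2)+1 = 1) by decide, show ((1:ZMod 2)+0 = 1) by decide,
    show ((0:ZMod 2)+0 = 0) by decide]
  simp only [map_add, pderiv_mul]
  simp (config := { decide := true }) only [sgn', pderiv_X_self, pderiv_X_of_ne, ne_eq,
    Prod.mk.injEq, not_and, mul_zero, zero_mul, mul_one, one_mul, add_zero, zero_add,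
    if_true, if_false, reduceIte, Int.cast_one, Int.cast_neg, _root_.map_one, _root_.map_neg]
  ring

lemma key110_6 : ∑ σ : V3, wvec' (1,1,0) σ * pderiv σ (Pq (0, 0, 1) (0, 1, 0)) = 0 := by
  rw [v3_sum']
  unfold Pq wvec'
  rw [v3_sum']
  simp only [Prod.mk_add_mk, show ((1:ZMod 2)+1 = 0) by decide,
    show ((0:ZMod 2)+1 = 1) by decide, show ((1:ZMod 2)+0 = 1) by decide,
    show ((0:ZMod 2)+0 = 0) by decide]
  simp only [map_add, pderiv_mul]
  simp (config := { decide := true }) only [sgn', pderiv_X_self, pderiv_X_of_ne, ne_eq,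
    Prod.mk.injEq, not_and, mul_zero, zero_mul, mul_one, one_mul, add_zero, zero_add,
    if_true, if_false, reduceIte, Int.cast_one, Int.cast_neg, _root_.map_one, _root_.map_neg]
  ring

lemma key010 (j : Fin 7) : ∑ σ : V3, wvec' (0,1,0) σ * jac σ j = 0 := by
  unfold jac cols
  fin_cases j <;> [exact key010_0; exact key010_1; exact key010_2; exact key010_3; exact key010_4; exact key010_5; exact key010_6]

lemma key110 (j : Fin 7) : ∑ σ : V3, wvec' (1,1,0) σ * jac σ j = 0 := by
  unfold jac cols
  fin_cases j <;> [exact key110_0; exact key110_1; exact key110_2; exact key110_3; exact key110_4; exact key110_5; exact key110_6]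


/-- The combination coefficient. -/
def cf' (ρ σ : V3) : ℤ := sgn' (1,1,0) ρ * sgn' (0,1,0) σ - sgn' (0,1,0) ρ * sgn' (1,1,0) σ

/-- The left kernel vector vanishing at `ρ`. -/
noncomputable def uvec' (ρ σ : V3) : MvPolynomial V3 ℂ := C ((cf' ρ σ : ℤ) : ℂ) * X σ

lemma uvec_key (ρ : V3) (j : Fin 7) : ∑ σ : V3, uvec' ρ σ * jac σ j = 0 := by
  have h : ∀ σ : V3, uvec' ρ σ * jac σ j
      = C ((sgn' (1,1,0) ρ : ℤ) : ℂ) * (wvec' (0,1,0) σ * jac σ j)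
        - C ((sgn' (0,1,0) ρ : ℤ) : ℂ) * (wvec' (1,1,0) σ * jac σ j) := by
    intro σ
    simp only [uvec', wvec', cf', Int.cast_sub, Int.cast_mul, map_sub, C_mul]
    ring
  rw [Finset.sum_congr rfl (fun σ _ => h σ), Finset.sum_sub_distrib,
    ← Finset.mul_sum, ← Finset.mul_sum, key010, key110, mul_zero, mul_zero, sub_zero]

lemma uvec_self (ρ : V3) : uvec' ρ ρ = 0 := by
  have : cf' ρ ρ = 0 := by unfold cf'; ring
  simp [uvec', this]

lemma cf_ne (ρ : V3) : cf' ρ (ρ + (1,0,0)) ≠ 0 := by revert ρ; decide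

lemma uvec_ne (ρ : V3) : uvec' ρ (ρ + (1,0,0)) ≠ 0 := by
  unfold uvec'
  simpa [X_ne_zero] using cf_ne ρ

/-- Every 7 × 7 minor of the 8 × 7 Jacobian matrix of `P₂, P₃, P₂₄, P₃₄, P₂₅, P₃₅, P₁₂`
is identically zero. -/
theorem jac_minors_vanish :
    ∀ f : Fin 7 → V3, Function.Injective f → (jac.submatrix f id).det = 0 := by
  intro f hf
  rw [← Matrix.exists_vecMul_eq_zero_iff]
  -- find the missing row `ρ`
  obtain ⟨ρ, hρ⟩ : ∃ ρ : V3, ρ ∉ Finset.univ.image f := by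
    by_contra h
    push_neg at h
    have hle : (Finset.univ : Finset V3).card ≤ (Finset.univ.image f).card :=
      Finset.card_le_card (fun x _ => h x)
    rw [Finset.card_image_of_injective _ hf, Finset.card_univ, Finset.card_univ] at hle
    have h8 : Fintype.card V3 = 8 := by simp
    have h7 : Fintype.card (Fin 7) = 7 := by simp
    omega
  have himage : Finset.univ.image f = Finset.univ \ {ρ} := by
    apply Finset.eq_of_subset_of_card_le
    · intro x hx
      simp only [Finset.mem_sdiff, Finset.mem_univ, Finset.mem_singleton, true_and]
      rintro rfl; exact hρ hx
    · rw [Finset.card_sdiff_of_subset (by simp), Finset.card_image_of_injective _ hf]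
      simp
  refine ⟨fun i => uvec' ρ (f i), ?_, ?_⟩
  · -- the kernel vector is nonzero
    have hmem : ρ + ((1,0,0) : V3) ∈ Finset.univ.image f := by
      rw [himage]
      simp only [Finset.mem_sdiff, Finset.mem_univ, Finset.mem_singleton, true_and]
      intro h
      have h1 := congrArg Prod.fst h
      simp only [Prod.fst_add] at h1
      exact one_ne_zero (add_eq_left.mp h1)
    obtain ⟨i, _, hi⟩ := Finset.mem_image.mp hmem
    intro h0
    apply uvec_ne ρ
    rw [← hi]
    exact congrFun h0 i
  · -- it is indeed in the left kernel
    funext j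
    have h0 : ((fun i => uvec' ρ (f i)) ᵥ* jac.submatrix f id) j
        = ∑ i : Fin 7, uvec' ρ (f i) * jac (f i) j := by
      simp [Matrix.vecMul, dotProduct, Matrix.submatrix_apply]
    have hsum : ∑ σ ∈ Finset.univ.image f, uvec' ρ σ * jac σ j
        = ∑ i : Fin 7, uvec' ρ (f i) * jac (f i) j :=
      Finset.sum_image (fun x _ y _ hxy => hf hxy)
    rw [h0, ← hsum, himage, Finset.sum_sdiff_eq_sub (Finset.subset_univ _),
      Finset.sum_singleton, uvec_self, zero_mul, sub_zero, uvec_key]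
    rfl
end
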